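/- Let A, B, C be groupoids and S, T distributors as above. The comprehensive (final, discrete fibration) factorization of the span functor T ⋄ S ⥤ A × C (projecting the pullback of the element categories to A × C) has its discrete fibration part isomorphic over A × C to the category of elements of the composite distributor T ⊗ S. -/

import Mathlib

open CategoryTheory Opposite

universe w v u

def IsDiscreteFibration {A : Type*} [Category A] {B : Type*} [Category B] (F : A ⥤ B) : Prop :=
  ∀ {a' : A} {b : B} (β : b ⟶ F.obj a'),
    ∃! p : Σ a : A, a ⟶ a',
      (⟨F.obj p.1, F.map p.2⟩ : Σ x : B, x ⟶ F.obj a') = ⟨b, β⟩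


section PairLemmas

universe u1 v1 u2 v2

variable {X : Type u1} [Category.{v1} X] {Y : Type u2} [Category.{v2} Y]

lemma pair_comp_fst {x1 x2 x3 : X} {y : Y} (f : x1 ⟶ x2) (g : x2 ⟶ x3) :
    @CategoryStruct.comp (X × Y) _ (x1, y) (x2, y) (x3, y) (f, 𝟙 y) (g, 𝟙 y) =
      (f ≫ g, 𝟙 y) := by
  simp [prod_comp]

lemma pair_comp_snd {x : X} {y1 y2 y3 : Y} (f : y1 ⟶ y2) (g : y2 ⟶ y3) :
    @CategoryStruct.comp (X × Y) _ (x, y1) (x, y2) (x, y3) (𝟙 x, f) (𝟙 x, g) =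
      (𝟙 x, f ≫ g) := by
  simp [prod_comp]

lemma pair_swap {x1 x2 : X} {y1 y2 : Y} (f : x1 ⟶ x2) (g : y1 ⟶ y2) :
    @CategoryStruct.comp (X × Y) _ (x1, y1) (x2, y1) (x2, y2) (f, 𝟙 y1) (𝟙 x2, g) =
      @CategoryStruct.comp (X × Y) _ (x1, y1) (x1, y2) (x2, y2) (𝟙 x1, g) (f, 𝟙 y2) := by
  simp [prod_comp]

end PairLemmas

section Distrib

variable {A : Type u} [Groupoid.{u} A] {B : Type u} [Groupoid.{u} B]

/-- Compatibility of the two actions of a distributor with composition. -/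
lemma dist_comm_comp (S : Bᵒᵖ × A ⥤ Type u)
    {a1 a2 a3 : A} {b1 b2 b3 : B} (α1 : a1 ⟶ a2) (α2 : a2 ⟶ a3)
    (β1 : b1 ⟶ b2) (β2 : b2 ⟶ b3)
    {s1 : S.obj (op b1, a1)} {s2 : S.obj (op b2, a2)} {s3 : S.obj (op b3, a3)}
    (h1 : S.map ((𝟙 (op b1), α1) : (op b1, a1) ⟶ (op b1, a2)) s1 =
      S.map ((β1.op, 𝟙 a2) : (op b2, a2) ⟶ (op b1, a2)) s2)
    (h2 : S.map ((𝟙 (op b2), α2) : (op b2, a2) ⟶ (op b2, a3)) s2 =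
      S.map ((β2.op, 𝟙 a3) : (op b3, a3) ⟶ (op b2, a3)) s3) :
    S.map ((𝟙 (op b1), α1 ≫ α2) : (op b1, a1) ⟶ (op b1, a3)) s1 =
      S.map (((β1 ≫ β2).op, 𝟙 a3) : (op b3, a3) ⟶ (op b1, a3)) s3 := by
  calc S.map ((𝟙 (op b1), α1 ≫ α2) : (op b1, a1) ⟶ (op b1, a3)) s1
      = S.map ((𝟙 (op b1), α2) : (op b1, a2) ⟶ (op b1, a3))
          (S.map ((𝟙 (op b1), α1) : (op b1, a1) ⟶ (op b1, a2)) s1) := by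
        rw [← FunctorToTypes.map_comp_apply, pair_comp_snd]
    _ = S.map ((𝟙 (op b1), α2) : (op b1, a2) ⟶ (op b1, a3))
          (S.map ((β1.op, 𝟙 a2) : (op b2, a2) ⟶ (op b1, a2)) s2) := by rw [h1]
    _ = S.map ((β1.op, 𝟙 a3) : (op b2, a3) ⟶ (op b1, a3))
          (S.map ((𝟙 (op b2), α2) : (op b2, a2) ⟶ (op b2, a3)) s2) := by
        rw [← FunctorToTypes.map_comp_apply, ← FunctorToTypes.map_comp_apply]
        congr 1; simp [prod_comp]
    _ = S.map ((β1.op, 𝟙 a3) : (op b2, a3) ⟶ (op b1, a3))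
          (S.map ((β2.op, 𝟙 a3) : (op b3, a3) ⟶ (op b2, a3)) s3) := by rw [h2]
    _ = S.map (((β1 ≫ β2).op, 𝟙 a3) : (op b3, a3) ⟶ (op b1, a3)) s3 := by
        rw [← FunctorToTypes.map_comp_apply, pair_comp_fst, op_comp]

end Distrib

/-- The category of elements `𝕊` of a distributor `S : Bᵒᵖ × A ⥤ Type`. -/
structure Delt {A : Type u} [Groupoid.{u} A] {B : Type u} [Groupoid.{u} B]
    (S : Bᵒᵖ × A ⥤ Type u) where
  a : A
  b : B
  s : S.obj (op b, a)

namespace Delt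

variable {A : Type u} [Groupoid.{u} A] {B : Type u} [Groupoid.{u} B] {S : Bᵒᵖ × A ⥤ Type u}

/-- Morphisms in the category of elements of a distributor. -/
@[ext]
structure Hom (X Y : Delt S) where
  α : X.a ⟶ Y.a
  β : X.b ⟶ Y.b
  comm : S.map ((𝟙 (op X.b), α) : (op X.b, X.a) ⟶ (op X.b, Y.a)) X.s =
      S.map ((β.op, 𝟙 Y.a) : (op Y.b, Y.a) ⟶ (op X.b, Y.a)) Y.s

instance : Category (Delt S) where
  Hom := Hom
  id X := ⟨𝟙 X.a, 𝟙 X.b, by simp⟩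
  comp {X Y Z} f g := ⟨f.α ≫ g.α, f.β ≫ g.β, dist_comm_comp S f.α g.α f.β g.β f.comm g.comm⟩
  id_comp f := by apply Hom.ext <;> simp
  comp_id f := by apply Hom.ext <;> simp
  assoc f g h := by apply Hom.ext <;> simp

/-- The projection `𝕊 ⥤ A × B`. -/
def proj (S : Bᵒᵖ × A ⥤ Type u) : Delt S ⥤ A × B where
  obj X := (X.a, X.b)
  map {X Y} f := (Hom.α f, Hom.β f)
  map_id X := rfl
  map_comp f g := rfl

end Delt

section Tensor

variable {A : Type u} [Groupoid.{u} A] {B : Type u} [Groupoid.{u} B]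
  {C : Type u} [Groupoid.{u} C]

/-- The relation generating the coend quotient: `(t, s'·β) ∼ (β·t, s')`. -/
def TensorRel (S : Bᵒᵖ × A ⥤ Type u) (T : Cᵒᵖ × B ⥤ Type u) (c : Cᵒᵖ) (a : A) :
    (Σ b : B, T.obj (c, b) × S.obj (op b, a)) →
    (Σ b : B, T.obj (c, b) × S.obj (op b, a)) → Prop :=
  fun p q => ∃ β : p.1 ⟶ q.1,
    q.2.1 = T.map ((𝟙 c, β) : (c, p.1) ⟶ (c, q.1)) p.2.1 ∧
    p.2.2 = S.map ((β.op, 𝟙 a) : (op q.1, a) ⟶ (op p.1, a)) q.2.2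

/-- The composite distributor `T ⊗ S`, given by the coend
`(T ⊗ S)(c,a) = ∫^b T(c,b) × S(b,a)`. -/
def Tensor (S : Bᵒᵖ × A ⥤ Type u) (T : Cᵒᵖ × B ⥤ Type u) : Cᵒᵖ × A ⥤ Type u where
  obj x := Quot (TensorRel S T x.1 x.2)
  map {x y} f := TypeCat.ofHom <| Quot.map
    (fun p => ⟨p.1, T.map ((f.1, 𝟙 p.1) : (x.1, p.1) ⟶ (y.1, p.1)) p.2.1,
      S.map ((𝟙 (op p.1), f.2) : (op p.1, x.2) ⟶ (op p.1, y.2)) p.2.2⟩)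
    (by
      rintro ⟨b, t, s⟩ ⟨b', t', s'⟩ ⟨β, h1, h2⟩
      dsimp only at h1 h2 ⊢
      refine ⟨β, ?_, ?_⟩
      · rw [h1, ← FunctorToTypes.map_comp_apply, ← FunctorToTypes.map_comp_apply, pair_swap]
      · rw [h2, ← FunctorToTypes.map_comp_apply, ← FunctorToTypes.map_comp_apply, pair_swap])
  map_id x := by
    ext q; revert q; refine fun q => Quot.inductionOn q fun p => ?_
    obtain ⟨b, t, s⟩ := p
    show Quot.mk (TensorRel S T x.1 x.2)
        ⟨b, T.map ((𝟙 x.1, 𝟙 b) : (x.1, b) ⟶ (x.1, b)) t,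
          S.map ((𝟙 (op b), 𝟙 x.2) : (op b, x.2) ⟶ (op b, x.2)) s⟩ =
      Quot.mk (TensorRel S T x.1 x.2) ⟨b, t, s⟩
    have e1 : T.map ((𝟙 x.1, 𝟙 b) : (x.1, b) ⟶ (x.1, b)) t = t := by
      rw [show ((𝟙 x.1, 𝟙 b) : (x.1, b) ⟶ (x.1, b)) = 𝟙 (x.1, b) from rfl,
        FunctorToTypes.map_id_apply]
    have e2 : S.map ((𝟙 (op b), 𝟙 x.2) : (op b, x.2) ⟶ (op b, x.2)) s = s := by
      rw [show ((𝟙 (op b), 𝟙 x.2) : (op b, x.2) ⟶ (op b, x.2)) = 𝟙 (op b, x.2) from rfl,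
        FunctorToTypes.map_id_apply]
    rw [e1, e2]
  map_comp {x y z} f g := by
    ext q; revert q; refine fun q => Quot.inductionOn q fun p => ?_
    obtain ⟨b, t, s⟩ := p
    show Quot.mk (TensorRel S T z.1 z.2)
        ⟨b, T.map ((f.1 ≫ g.1, 𝟙 b) : (x.1, b) ⟶ (z.1, b)) t,
          S.map ((𝟙 (op b), f.2 ≫ g.2) : (op b, x.2) ⟶ (op b, z.2)) s⟩ =
      Quot.mk (TensorRel S T z.1 z.2)
        ⟨b, T.map ((g.1, 𝟙 b) : (y.1, b) ⟶ (z.1, b))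
              (T.map ((f.1, 𝟙 b) : (x.1, b) ⟶ (y.1, b)) t),
          S.map ((𝟙 (op b), g.2) : (op b, y.2) ⟶ (op b, z.2))
            (S.map ((𝟙 (op b), f.2) : (op b, x.2) ⟶ (op b, y.2)) s)⟩
    have e1 : T.map ((f.1 ≫ g.1, 𝟙 b) : (x.1, b) ⟶ (z.1, b)) t =
        T.map ((g.1, 𝟙 b) : (y.1, b) ⟶ (z.1, b))
          (T.map ((f.1, 𝟙 b) : (x.1, b) ⟶ (y.1, b)) t) := by
      rw [← pair_comp_fst, FunctorToTypes.map_comp_apply]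
    have e2 : S.map ((𝟙 (op b), f.2 ≫ g.2) : (op b, x.2) ⟶ (op b, z.2)) s =
        S.map ((𝟙 (op b), g.2) : (op b, y.2) ⟶ (op b, z.2))
          (S.map ((𝟙 (op b), f.2) : (op b, x.2) ⟶ (op b, y.2)) s) := by
      rw [← pair_comp_snd, FunctorToTypes.map_comp_apply]
    rw [e1, e2]

end Tensor

section Diamond

variable {A : Type u} [Groupoid.{u} A] {B : Type u} [Groupoid.{u} B]
  {C : Type u} [Groupoid.{u} C]

/-- The (strict) pullback `T ⋄ S` of the two element categories `𝕊 ⥤ B` and `𝕋 ⥤ B`. -/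
structure Diamond (S : Bᵒᵖ × A ⥤ Type u) (T : Cᵒᵖ × B ⥤ Type u) where
  a : A
  b : B
  c : C
  s : S.obj (op b, a)
  t : T.obj (op c, b)

namespace Diamond

variable {S : Bᵒᵖ × A ⥤ Type u} {T : Cᵒᵖ × B ⥤ Type u}

/-- Morphisms in the pullback `T ⋄ S`. -/
@[ext]
structure Hom (X Y : Diamond S T) where
  α : X.a ⟶ Y.a
  β : X.b ⟶ Y.b
  γ : X.c ⟶ Y.c
  commS : S.map ((𝟙 (op X.b), α) : (op X.b, X.a) ⟶ (op X.b, Y.a)) X.s =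
      S.map ((β.op, 𝟙 Y.a) : (op Y.b, Y.a) ⟶ (op X.b, Y.a)) Y.s
  commT : T.map ((𝟙 (op X.c), β) : (op X.c, X.b) ⟶ (op X.c, Y.b)) X.t =
      T.map ((γ.op, 𝟙 Y.b) : (op Y.c, Y.b) ⟶ (op X.c, Y.b)) Y.t

instance : Category (Diamond S T) where
  Hom := Hom
  id X := ⟨𝟙 X.a, 𝟙 X.b, 𝟙 X.c, by simp, by simp⟩
  comp {X Y Z} f g := ⟨f.α ≫ g.α, f.β ≫ g.β, f.γ ≫ g.γ,
    dist_comm_comp S f.α g.α f.β g.β f.commS g.commS,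
    dist_comm_comp T f.β g.β f.γ g.γ f.commT g.commT⟩
  id_comp f := by apply Hom.ext <;> simp
  comp_id f := by apply Hom.ext <;> simp
  assoc f g h := by apply Hom.ext <;> simp

/-- The projection of the pullback span to `A × C`. -/
def proj (S : Bᵒᵖ × A ⥤ Type u) (T : Cᵒᵖ × B ⥤ Type u) : Diamond S T ⥤ A × C where
  obj X := (X.a, X.c)
  map {X Y} f := (Hom.α f, Hom.γ f)
  map_id X := rfl
  map_comp f g := rfl

end Diamond

/-- The canonical comparison functor `T ⋄ S ⥤ 𝕋 ⊗ 𝕊` from the pullback of the element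
categories to the category of elements of the composite distributor, sending `(s, t)` to
the class `s ⊗ t`. -/
def Qfun (S : Bᵒᵖ × A ⥤ Type u) (T : Cᵒᵖ × B ⥤ Type u) :
    Diamond S T ⥤ Delt (Tensor S T) where
  obj X := ⟨X.a, X.c, Quot.mk _ ⟨X.b, X.t, X.s⟩⟩
  map {X Y} f := ⟨Diamond.Hom.α f, Diamond.Hom.γ f, by
    show Quot.mk (TensorRel S T (op X.c) Y.a)
        ⟨X.b, T.map ((𝟙 (op X.c), 𝟙 X.b) : (op X.c, X.b) ⟶ (op X.c, X.b)) X.t,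
          S.map ((𝟙 (op X.b), f.α) : (op X.b, X.a) ⟶ (op X.b, Y.a)) X.s⟩ =
      Quot.mk (TensorRel S T (op X.c) Y.a)
        ⟨Y.b, T.map ((f.γ.op, 𝟙 Y.b) : (op Y.c, Y.b) ⟶ (op X.c, Y.b)) Y.t,
          S.map ((𝟙 (op Y.b), 𝟙 Y.a) : (op Y.b, Y.a) ⟶ (op Y.b, Y.a)) Y.s⟩
    have e1 : T.map ((𝟙 (op X.c), 𝟙 X.b) : (op X.c, X.b) ⟶ (op X.c, X.b)) X.t = X.t := by
      rw [show ((𝟙 (op X.c), 𝟙 X.b) : (op X.c, X.b) ⟶ (op X.c, X.b)) = 𝟙 (op X.c, X.b)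
        from rfl, FunctorToTypes.map_id_apply]
    have e2 : S.map ((𝟙 (op Y.b), 𝟙 Y.a) : (op Y.b, Y.a) ⟶ (op Y.b, Y.a)) Y.s = Y.s := by
      rw [show ((𝟙 (op Y.b), 𝟙 Y.a) : (op Y.b, Y.a) ⟶ (op Y.b, Y.a)) = 𝟙 (op Y.b, Y.a)
        from rfl, FunctorToTypes.map_id_apply]
    rw [e1, e2]
    exact Quot.sound ⟨Diamond.Hom.β f, (Diamond.Hom.commT f).symm, Diamond.Hom.commS f⟩⟩
  map_id X := by apply Delt.Hom.ext <;> rfl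
  map_comp f g := by apply Delt.Hom.ext <;> rfl

/-! For `m : M`, finality of `E` provides an arrow `m ⟶ E(a, b, c, s, t)`; pulling the class
`t ⊗ s` back along its image in `A × C` gives an element of `T ⊗ S` over `D m`, independent of
the arrow because the comma category `m / E` is connected. This is a functor `M ⥤ 𝕋 ⊗ 𝕊` over
`A × C`. Conversely the class `t ⊗ s` over `(a, c)` determines the object `E(a, b, c, s, t)`: the
coend relations come from morphisms of `T ⋄ S` over identities, which `E` must send to identities
since `D` is a discrete fibration. This inverts the functor on objects, and a functor between
discrete fibrations over the same base that is bijective on objects is an isomorphism. -/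

end Diamond

namespace IsDiscreteFibration

variable {M : Type*} [Category M] {X : Type*} [Category X] {D : M ⥤ X}
  {𝒟 : Type*} [Category 𝒟] {E : 𝒟 ⥤ M} {P : 𝒟 ⥤ X}

theorem lift_unique (hD : IsDiscreteFibration D) {m n z : M} (g : m ⟶ z) (h : n ⟶ z)
    (e : (⟨D.obj m, D.map g⟩ : Σ x : X, x ⟶ D.obj z) = ⟨D.obj n, D.map h⟩) :
    (⟨m, g⟩ : Σ k : M, k ⟶ z) = ⟨n, h⟩ := by
  obtain ⟨_, _, unique⟩ := hD (D.map h)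
  exact (unique ⟨m, g⟩ e).trans (unique ⟨n, h⟩ rfl).symm

theorem eq_of_map_eq_eqToHom_comp (hD : IsDiscreteFibration D) {m n z : M} (g : m ⟶ z)
    (h : n ⟶ z) (e : D.obj m = D.obj n) (he : D.map g = eqToHom e ≫ D.map h) : m = n :=
  congrArg Sigma.fst <| hD.lift_unique g h <| Sigma.ext e <| by
    rw [he]; exact eqToHom_comp_heq _ _

theorem faithful (hD : IsDiscreteFibration D) : D.Faithful where
  map_injective {_ _} f g h := eq_of_heq (Sigma.mk.inj (hD.lift_unique f g (by rw [h]))).2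

theorem obj_eq_of_comp_eq (hD : IsDiscreteFibration D) (hfac : E ⋙ D = P) {d d' : 𝒟} {m : M}
    (f : d ⟶ d') (u : m ⟶ E.obj d') (e : P.obj d = D.obj m)
    (hu : P.map f = eqToHom e ≫ D.map u ≫ eqToHom (Functor.congr_obj hfac d')) :
    E.obj d = m := by
  refine hD.eq_of_map_eq_eqToHom_comp (E.map f) u ((Functor.congr_obj hfac d).trans e) ?_
  rw [← Functor.comp_map, Functor.congr_hom hfac, hu]
  simp

theorem obj_eq_of_map_eq_eqToHom (hD : IsDiscreteFibration D) (hfac : E ⋙ D = P) {d d' : 𝒟}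
    (f : d ⟶ d') (e : P.obj d = P.obj d') (hf : P.map f = eqToHom e) : E.obj d = E.obj d' :=
  hD.obj_eq_of_comp_eq hfac f (𝟙 _) (e.trans (Functor.congr_obj hfac d').symm) (by simp [hf])

theorem full_of_comp {N : Type*} [Category N] {L : M ⥤ N} {Q : N ⥤ X}
    (hLQ : IsDiscreteFibration (L ⋙ Q)) (hQ : IsDiscreteFibration Q)
    (hL : Function.Injective L.obj) : L.Full where
  map_surjective {m m'} h := by
    obtain ⟨⟨n, g⟩, hg, -⟩ := hLQ (Q.map h)
    obtain ⟨hn, hgh⟩ := Sigma.mk.inj (hQ.lift_unique (L.map g) h hg)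
    obtain rfl := hL hn
    exact ⟨g, eq_of_heq hgh⟩

end IsDiscreteFibration

namespace Delt

variable {A : Type u} [Groupoid.{u} A] {B : Type u} [Groupoid.{u} B] (S : Bᵒᵖ × A ⥤ Type u)

def transport {x y : A × B} (f : x ⟶ y) (s : S.obj (op y.2, y.1)) : S.obj (op x.2, x.1) :=
  S.map ((f.2.op, Groupoid.inv f.1) : (op y.2, y.1) ⟶ (op x.2, x.1)) s

theorem transport_comp {x y z : A × B} (f : x ⟶ y) (g : y ⟶ z) (s : S.obj (op z.2, z.1)) :
    transport S (f ≫ g) s = transport S f (transport S g s) := by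
  simp only [transport, ← Functor.map_comp_apply]
  congr 2
  ext
  simp [Groupoid.inv_eq_inv]

theorem mk_transport_eqToHom {x y : A × B} (h : x = y) (s : S.obj (op y.2, y.1)) :
    (⟨x.1, x.2, transport S (eqToHom h) s⟩ : Delt S) = ⟨y.1, y.2, s⟩ := by
  subst h
  simp only [transport, eqToHom_refl, prod_id_fst, prod_id_snd, op_id, Groupoid.inv_eq_inv,
    IsIso.inv_id]
  exact congrArg _ (S.map_id_apply _ s)

variable {S}

theorem hom_comm_iff {X Y : Delt S} (α : X.a ⟶ Y.a) (β : X.b ⟶ Y.b) :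
    S.map ((𝟙 (op X.b), α) : (op X.b, X.a) ⟶ (op X.b, Y.a)) X.s =
        S.map ((β.op, 𝟙 Y.a) : (op Y.b, Y.a) ⟶ (op X.b, Y.a)) Y.s ↔
      X.s = transport S ((α, β) : (X.a, X.b) ⟶ (Y.a, Y.b)) Y.s := by
  constructor
  · intro h
    have := congrArg (S.map ((𝟙 (op X.b), Groupoid.inv α) : (op X.b, Y.a) ⟶ (op X.b, X.a))) h
    simpa [transport, ← Functor.map_comp_apply, Groupoid.inv_eq_inv, ← prod_id] using this
  · intro h
    simp [h, transport, ← Functor.map_comp_apply, Groupoid.inv_eq_inv]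

theorem isDiscreteFibration_proj : IsDiscreteFibration (proj S) := by
  intro Y x f
  refine ⟨⟨⟨x.1, x.2, transport S f Y.s⟩, ⟨f.1, f.2, (hom_comm_iff _ _).2 rfl⟩⟩, rfl, ?_⟩
  rintro ⟨⟨a, b, s⟩, ⟨α, β, comm⟩⟩ hg
  obtain ⟨rfl, hf⟩ := Sigma.mk.inj hg
  obtain rfl := eq_of_heq hf
  dsimp only at α β comm
  obtain rfl : s = transport S ((α, β) : (a, b) ⟶ (Y.a, Y.b)) Y.s :=
    (hom_comm_iff (X := ⟨a, b, s⟩) α β).1 comm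
  rfl

end Delt

section Span

variable {A : Type u} [Groupoid.{u} A] {B : Type u} [Groupoid.{u} B]
  {C : Type u} [Groupoid.{u} C] {S : Bᵒᵖ × A ⥤ Type u} {T : Cᵒᵖ × B ⥤ Type u}

namespace Diamond

abbrev restrict (d : Diamond S T) {x : A × C} (χ : x ⟶ (d.a, d.c)) : Diamond S T :=
  ⟨x.1, d.b, x.2, S.map ((𝟙 (op d.b), Groupoid.inv χ.1) : (op d.b, d.a) ⟶ (op d.b, x.1)) d.s,
    T.map ((χ.2.op, 𝟙 d.b) : (op d.c, d.b) ⟶ (op x.2, d.b)) d.t⟩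

def restrictHom (d : Diamond S T) {x : A × C} (χ : x ⟶ (d.a, d.c)) : d.restrict χ ⟶ d :=
  ⟨χ.1, 𝟙 d.b, χ.2, (S.map_comp_apply _ _ _).symm.trans (by
    simp only [prod_comp, Category.id_comp, Groupoid.inv_comp, op_id]),
    (T.map_comp_apply _ _ _).symm.trans (by simp)⟩

def homOfTensorRel {a : A} {b b' : B} {c : C} {s : S.obj (op b, a)} {t : T.obj (op c, b)}
    {s' : S.obj (op b', a)} {t' : T.obj (op c, b')} (β : b ⟶ b')
    (ht : t' = T.map ((𝟙 (op c), β) : (op c, b) ⟶ (op c, b')) t)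
    (hs : s = S.map ((β.op, 𝟙 a) : (op b', a) ⟶ (op b, a)) s') :
    (⟨a, b, c, s, t⟩ : Diamond S T) ⟶ ⟨a, b', c, s', t'⟩ :=
  ⟨𝟙 a, β, 𝟙 c, by simp [hs, ← Functor.map_comp_apply], by simp [ht, ← Functor.map_comp_apply]⟩

end Diamond

theorem Qfun_obj_surjective : Function.Surjective (Qfun S T).obj := by
  rintro ⟨a, c, q⟩
  obtain ⟨⟨b, t, s⟩, rfl⟩ := Quot.exists_rep q
  exact ⟨⟨a, b, c, s, t⟩, rfl⟩

variable {M : Type u} [Category.{u} M] {E : Diamond S T ⥤ M} {D : M ⥤ A × C}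
  (hfac : E ⋙ D = Diamond.proj S T)

def objOfElement (hD : IsDiscreteFibration D) (X : Delt (Tensor S T)) : M :=
  Quot.lift (fun p => E.obj ⟨X.a, p.1, X.b, p.2.2, p.2.1⟩)
    (fun _ _ ⟨β, ht, hs⟩ =>
      hD.obj_eq_of_map_eq_eqToHom hfac (Diamond.homOfTensorRel β ht hs) rfl rfl) X.s

def baseArrow {m : M} (u : StructuredArrow m E) : D.obj m ⟶ (Diamond.proj S T).obj u.right :=
  D.map u.hom ≫ eqToHom (Functor.congr_obj hfac u.right)

def elementOfArrow {m : M} (u : StructuredArrow m E) :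
    (Tensor S T).obj (op (D.obj m).2, (D.obj m).1) :=
  Delt.transport (Tensor S T) (baseArrow hfac u) ((Qfun S T).obj u.right).s

theorem baseArrow_comp {m : M} {u v : StructuredArrow m E} (w : u ⟶ v) :
    baseArrow hfac v = baseArrow hfac u ≫ (Diamond.proj S T).map w.right := by
  rw [baseArrow, baseArrow, ← StructuredArrow.w w, D.map_comp, ← Functor.comp_map,
    Functor.congr_hom hfac]
  simp only [Category.assoc, eqToHom_trans, eqToHom_refl, Category.comp_id]

theorem baseArrow_mk_comp {m m' : M} (f : m ⟶ m') (u : StructuredArrow m' E) :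
    baseArrow hfac (StructuredArrow.mk (f ≫ u.hom)) = D.map f ≫ baseArrow hfac u := by
  simp [baseArrow]

theorem baseArrow_mk_id (d : Diamond S T) :
    baseArrow hfac (StructuredArrow.mk (𝟙 (E.obj d))) = eqToHom (Functor.congr_obj hfac d) := by
  simp [baseArrow]

theorem elementOfArrow_eq_of_hom {m : M} {u v : StructuredArrow m E} (w : u ⟶ v) :
    elementOfArrow hfac u = elementOfArrow hfac v := by
  have hw : ((Qfun S T).obj u.right).s =
      Delt.transport _ ((Diamond.proj S T).map w.right) ((Qfun S T).obj v.right).s :=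
    (Delt.hom_comm_iff _ _).1 ((Qfun S T).map w.right).comm
  rw [elementOfArrow, elementOfArrow, hw, baseArrow_comp hfac w]
  exact (Delt.transport_comp _ _ _ _).symm

theorem elementOfArrow_mk_comp {m m' : M} (f : m ⟶ m') (u : StructuredArrow m' E) :
    elementOfArrow hfac (StructuredArrow.mk (f ≫ u.hom)) =
      Delt.transport _ (D.map f) (elementOfArrow hfac u) := by
  rw [elementOfArrow, elementOfArrow, baseArrow_mk_comp]
  exact Delt.transport_comp _ _ _ _

variable [E.Final]

theorem elementOfArrow_eq {m : M} (u v : StructuredArrow m E) :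
    elementOfArrow hfac u = elementOfArrow hfac v :=
  constant_of_preserves_morphisms _ (fun _ _ w => elementOfArrow_eq_of_hom hfac w) u v

theorem elementOfArrow_eq_transport {m m' : M} (f : m ⟶ m') (u : StructuredArrow m E)
    (u' : StructuredArrow m' E) :
    elementOfArrow hfac u = Delt.transport _ (D.map f) (elementOfArrow hfac u') := by
  rw [elementOfArrow_eq hfac u (StructuredArrow.mk (f ≫ u'.hom)), elementOfArrow_mk_comp]

noncomputable def toDelt : M ⥤ Delt (Tensor S T) where
  obj m := ⟨(D.obj m).1, (D.obj m).2, elementOfArrow hfac (Classical.arbitrary _)⟩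
  map f := ⟨(D.map f).1, (D.map f).2,
    (Delt.hom_comm_iff (X := ⟨_, _, _⟩) (Y := ⟨_, _, _⟩) _ _).2
      (elementOfArrow_eq_transport hfac f _ _)⟩
  map_id m := Delt.Hom.ext (congrArg Prod.fst (D.map_id m)) (congrArg Prod.snd (D.map_id m))
  map_comp f g :=
    Delt.Hom.ext (congrArg Prod.fst (D.map_comp f g)) (congrArg Prod.snd (D.map_comp f g))

theorem toDelt_comp_proj : toDelt hfac ⋙ Delt.proj (Tensor S T) = D :=
  rfl

theorem objOfElement_toDelt_obj (hD : IsDiscreteFibration D) (m : M) :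
    objOfElement hfac hD ((toDelt hfac).obj m) = m :=
  let u := Classical.arbitrary (StructuredArrow m E)
  hD.obj_eq_of_comp_eq hfac (u.right.restrictHom (baseArrow hfac u)) u.hom rfl
    (Category.id_comp _).symm

theorem toDelt_obj_injective (hD : IsDiscreteFibration D) :
    Function.Injective (toDelt hfac).obj :=
  Function.LeftInverse.injective (objOfElement_toDelt_obj hfac hD)

theorem toDelt_obj_eq_Qfun_obj (d : Diamond S T) :
    (toDelt hfac).obj (E.obj d) = (Qfun S T).obj d := by
  show (⟨_, _, elementOfArrow hfac (Classical.arbitrary _)⟩ : Delt (Tensor S T)) = _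
  rw [elementOfArrow_eq hfac _ (StructuredArrow.mk (𝟙 (E.obj d))), elementOfArrow,
    baseArrow_mk_id]
  exact Delt.mk_transport_eqToHom _ _ _

theorem toDelt_obj_surjective : Function.Surjective (toDelt hfac).obj := fun X => by
  obtain ⟨d, rfl⟩ := Qfun_obj_surjective X
  exact ⟨E.obj d, toDelt_obj_eq_Qfun_obj hfac d⟩

theorem toDelt_isEquivalence (hD : IsDiscreteFibration D) :
    (toDelt hfac).IsEquivalence where
  faithful := have := hD.faithful; Functor.Faithful.of_comp_eq (toDelt_comp_proj hfac)
  full := IsDiscreteFibration.full_of_comp hD Delt.isDiscreteFibration_proj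
    (toDelt_obj_injective hfac hD)
  essSurj := ⟨fun X => (toDelt_obj_surjective hfac X).elim fun m hm => ⟨m, ⟨eqToIso hm⟩⟩⟩

end Span

/-- In any comprehensive (final, discrete fibration) factorization of the span functor
`T ⋄ S ⥤ A × C`, the discrete fibration part is equivalent, over `A × C`, to the category
of elements of the composite distributor `T ⊗ S`. -/
theorem comprehensive_factorization_of_span {A : Type u} [Groupoid.{u} A] {B : Type u}
    [Groupoid.{u} B] {C : Type u} [Groupoid.{u} C]
    (S : Bᵒᵖ × A ⥤ Type u) (T : Cᵒᵖ × B ⥤ Type u)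
    (M : Type u) [Category.{u} M] (E : Diamond S T ⥤ M) (D : M ⥤ A × C)
    (hE : E.Final) (hD : IsDiscreteFibration D) (hfac : E ⋙ D = Diamond.proj S T) :
    ∃ I : M ≌ Delt (Tensor S T),
      Nonempty (I.functor ⋙ Delt.proj (Tensor S T) ≅ D) := by
  have := toDelt_isEquivalence hfac hD
  exact ⟨(toDelt hfac).asEquivalence, ⟨eqToIso (toDelt_comp_proj hfac)⟩⟩
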